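/- As an identity of formal power series in x and y: Σ_{n≥1} Σ_{k=0}^{n-1} CT(n,k) x^n y^k = Σ_{n≥1} x^n (1+xy)^{n(n-1)/2} / Π_{k=0}^{n-1} (1 - (1+xy)^k x y), where CT(n,k) is the number of partitions of [n] with k arcs avoiding right crossings. -/

import Mathlib

open Finset

/-- A partial matching of `[m]`: a set of arcs `(i,j)` with `1 ≤ i < j ≤ m`
such that every vertex belongs to at most one arc. -/
def IsMatching (m : ℕ) (M : Finset (ℕ × ℕ)) : Prop :=
  (∀ p ∈ M, 1 ≤ p.1 ∧ p.1 < p.2 ∧ p.2 ≤ m) ∧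
  ∀ p ∈ M, ∀ q ∈ M, p ≠ q → p.1 ≠ q.1 ∧ p.1 ≠ q.2 ∧ p.2 ≠ q.1 ∧ p.2 ≠ q.2

/-- The linear (arc) diagram of a partition of `[n]`: every vertex is the left
endpoint of at most one arc and the right endpoint of at most one arc. -/
def IsPartitionDiagram (n : ℕ) (P : Finset (ℕ × ℕ)) : Prop :=
  (∀ p ∈ P, 1 ≤ p.1 ∧ p.1 < p.2 ∧ p.2 ≤ n) ∧
  ∀ p ∈ P, ∀ q ∈ P, p ≠ q → p.1 ≠ q.1 ∧ p.2 ≠ q.2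

/-- A 2-right crossing: arcs `(i1,j1)`, `(i2,j2)` with `i1<i2<j1<j2` and `j2-j1 ≤ 2`. -/
def Has2RightCrossing (M : Finset (ℕ × ℕ)) : Prop :=
  ∃ p ∈ M, ∃ q ∈ M, p.1 < q.1 ∧ q.1 < p.2 ∧ p.2 < q.2 ∧ q.2 ≤ p.2 + 2

/-- A right crossing: arcs `(i1,j1)`, `(i2,j2)` with `i1<i2<j1<j2` and `j2 = j1+1`. -/
def HasRightCrossing (M : Finset (ℕ × ℕ)) : Prop :=
  ∃ p ∈ M, ∃ q ∈ M, p.1 < q.1 ∧ q.1 < p.2 ∧ p.2 < q.2 ∧ q.2 = p.2 + 1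

/-- A right nesting: arcs `(i1,j1)`, `(i2,j2)` with `i1<i2<j2<j1` and `j1 = j2+1`. -/
def HasRightNesting (M : Finset (ℕ × ℕ)) : Prop :=
  ∃ p ∈ M, ∃ q ∈ M, p.1 < q.1 ∧ q.1 < q.2 ∧ q.2 < p.2 ∧ p.2 = q.2 + 1

/-- `P(m,k)`: partial matchings of `[m]` with `k` arcs avoiding 2-right crossings
and right nestings. -/
def PMSet (m k : ℕ) : Set (Finset (ℕ × ℕ)) :=
  {M | IsMatching m M ∧ M.card = k ∧ ¬ Has2RightCrossing M ∧ ¬ HasRightNesting M}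

/-- `CT(n,k)`: partitions of `[n]` with `k` arcs avoiding right crossings. -/
def CTSet (n k : ℕ) : Set (Finset (ℕ × ℕ)) :=
  {P | IsPartitionDiagram n P ∧ P.card = k ∧ ¬ HasRightCrossing P}

/-- `lmax x i = max(x_0, …, x_{i-1})` (with value `0` when `i = 0`). -/
def lmax (x : ℕ → ℕ) (i : ℕ) : ℕ := (Finset.range i).sup x

/-- `x_i` is a left-to-right maximum (with `x_0` always counted as one). -/
def IsLTRMax (x : ℕ → ℕ) (i : ℕ) : Prop := i = 0 ∨ lmax x i < x i

/-- `S(n,k)`: sequences `x_0 … x_{n-1}` (extended by `0`) with `x_0 = 0`,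
`0 ≤ x_i ≤ max(x_0…x_{i-1})+1`, `x_i < x_{i-1}` whenever `x_i < max(x_0…x_{i-1})`,
and exactly `n-k` left-to-right maxima. -/
def SeqSet (n k : ℕ) : Set (ℕ → ℕ) :=
  {x | (∀ i, n ≤ i → x i = 0) ∧ x 0 = 0 ∧
       (∀ i, 1 ≤ i → i < n → x i ≤ lmax x i + 1) ∧
       (∀ i, 1 ≤ i → i < n → x i < lmax x i → x i < x (i - 1)) ∧
       ((Finset.range n).filter (fun i => i = 0 ∨ lmax x i < x i)).card = n - k}
open MvPowerSeries in
/-- The generating-function term `x^n (1+xy)^{C(n,2)} / ∏_{k=0}^{n-1}(1-(1+xy)^k xy)`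
in `ℚ[[x,y]]`, with `x = X 0`, `y = X 1`. -/
noncomputable def gfTerm (n : ℕ) : MvPowerSeries (Fin 2) ℚ :=
  (X 0 : MvPowerSeries (Fin 2) ℚ) ^ n * (1 + X 0 * X 1) ^ (n.choose 2) *
    ∏ k ∈ Finset.range n, (1 - (1 + X 0 * X 1) ^ k * X 0 * X 1)⁻¹

/-!
Build a diagram by adding vertices one at a time. Call a vertex a *top* if it is not the left
endpoint of an arc: a diagram on `[a]` with `b` arcs has `n = a - b` tops. Its *state* is the rank,
among the tops, of the left endpoint of the arc ending at `a` (of `a` itself if there is none).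
The next vertex `a + 1` is either not a right endpoint, which adds a top and leads to state `n`,
or closes an arc `(i, a + 1)` at a top `i`. This arc makes a right crossing exactly when the
arc ending at `a` starts below `i` and `i < a`, so it is allowed iff the rank of `i` is below the
state or equal to `n - 1`, and that rank is the new state.

For fixed `n` these transitions are a linear system over `R⟦t⟧` (`t` counting arcs) whose dual
system is solved by `w ↦ (1 + t) ^ w`. Pairing the two gives `D (n + 1) * (1 - t (1 + t) ^ n) =
D n * (1 + t) ^ n` for the series `D n` of diagrams with `n` tops, hence
`D n * ∏_{j<n} (1 - t (1 + t) ^ j) = (1 + t) ^ (n choose 2)`. Substituting `t = xy` and multiplying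
by `x ^ n` gives `gfTerm n`.
-/

-- Both sides equal `∑ v w * h w - t * ∑ v w * (A h) w`, where `A` is the 0-1 matrix of `r`.
theorem mul_sum_eq_sum_mul_of_transfer {ι R : Type*} [CommRing R] (s : Finset ι)
    (r : ι → ι → Prop) [DecidableRel r] (t d : R) (u v h : ι → R)
    (hv : ∀ w ∈ s, v w = u w + t * ∑ w' ∈ s with r w' w, v w')
    (hh : ∀ w ∈ s, h w = d + t * ∑ w' ∈ s with r w w', h w') :
    d * ∑ w ∈ s, v w = ∑ w ∈ s, u w * h w := by
  have swap : ∑ w ∈ s, v w * (t * ∑ w' ∈ s with r w w', h w') =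
      ∑ w ∈ s, (t * ∑ w' ∈ s with r w' w, v w') * h w := by
    simp only [mul_sum, sum_mul, sum_filter]
    rw [sum_comm]
    refine sum_congr rfl fun w _ => sum_congr rfl fun w' _ => ?_
    split_ifs <;> ring
  calc d * ∑ w ∈ s, v w = ∑ w ∈ s, v w * (h w - t * ∑ w' ∈ s with r w w', h w') := by
        rw [mul_sum]
        exact sum_congr rfl fun w hw => by rw [hh w hw]; ring
    _ = ∑ w ∈ s, (v w - t * ∑ w' ∈ s with r w' w, v w') * h w := by
        simp only [mul_sub, sub_mul, sum_sub_distrib, swap]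
    _ = ∑ w ∈ s, u w * h w :=
        sum_congr rfl fun w hw => by rw [hv w hw]; ring

-- The dual system is solved by `w ↦ (1 + t) ^ w`, as `t * ∑ w' < w, (1 + t) ^ w' = (1 + t) ^ w - 1`.
theorem sum_mul_eq_of_transfer {R : Type*} [CommRing R] (t S : R) (j : ℕ) (v : ℕ → R)
    (hv : ∀ w ∈ range (j + 1),
      v w = (if w = j then S else 0) + t * ∑ w' ∈ range (j + 1) with w < w' ∨ w = j, v w') :
    (∑ w ∈ range (j + 1), v w) * (1 - t * (1 + t) ^ j) = S * (1 + t) ^ j := by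
  have hh : ∀ w ∈ range (j + 1), (1 + t) ^ w = (1 - t * (1 + t) ^ j) +
      t * ∑ w' ∈ range (j + 1) with w' < w ∨ w' = j, (1 + t) ^ w' := by
    intro w hw
    have hwj : w ≤ j := Nat.lt_succ_iff.mp (mem_range.mp hw)
    have hsplit : {w' ∈ range (j + 1) | w' < w ∨ w' = j} = insert j (range w) := by
      ext w'; simp only [mem_filter, mem_range, mem_insert]; omega
    have hgeom := geom_sum_mul (1 + t) w
    rw [add_sub_cancel_left] at hgeom
    rw [hsplit, sum_insert (by simp; omega)]
    linear_combination -hgeom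
  rw [mul_comm, mul_sum_eq_sum_mul_of_transfer _ (fun w w' => w' < w ∨ w' = j) t _ _ v _ hv hh,
    sum_eq_single j (fun w _ hw => by simp [hw]) (by simp)]
  simp

section Rank

variable {T : Finset ℕ} {i j w : ℕ}

def rankIn (T : Finset ℕ) (i : ℕ) : ℕ := #{t ∈ T | t < i}

theorem rankIn_lt_rankIn_iff (hi : i ∈ T) : rankIn T i < rankIn T j ↔ i < j := by
  constructor
  · intro h
    by_contra! hji
    exact (card_le_card (monotone_filter_right T fun t _ (ht : t < j) => ht.trans_le hji)).not_gt h
  · intro hij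
    refine card_lt_card ⟨monotone_filter_right T fun t _ (ht : t < i) => ht.trans hij,
      fun hsub => ?_⟩
    simpa using hsub (mem_filter.mpr ⟨hi, hij⟩)

theorem rankIn_injOn : Set.InjOn (rankIn T) T := by
  intro i hi j hj h
  by_contra hne
  rcases Nat.lt_or_gt_of_ne hne with hlt | hlt
  · exact (rankIn_lt_rankIn_iff hi |>.mpr hlt).ne h
  · exact (rankIn_lt_rankIn_iff hj |>.mpr hlt).ne h.symm

theorem rankIn_of_forall_le (hm : i ∈ T) (hmax : ∀ t ∈ T, t ≤ i) : rankIn T i = #T - 1 := by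
  have : {t ∈ T | t < i} = T.erase i := by
    ext t
    simp only [mem_filter, mem_erase]
    exact ⟨fun ⟨ht, hlt⟩ => ⟨hlt.ne, ht⟩, fun ⟨hne, ht⟩ => ⟨ht, (hmax t ht).lt_of_ne hne⟩⟩
  rw [rankIn, this, card_erase_of_mem hm]

theorem rankIn_lt_card (hi : i ∈ T) : rankIn T i < #T :=
  card_lt_card ⟨filter_subset _ _, fun h => by simpa using h hi⟩

theorem image_rankIn : T.image (rankIn T) = range #T :=
  eq_of_subset_of_card_le (fun _ hw => by
      obtain ⟨i, hi, rfl⟩ := mem_image.mp hw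
      exact mem_range.mpr (rankIn_lt_card hi))
    (by rw [card_range, card_image_of_injOn rankIn_injOn])

theorem exists_rankIn_eq (hw : w < #T) : ∃ i ∈ T, rankIn T i = w :=
  mem_image.mp (image_rankIn ▸ mem_range.mpr hw)

end Rank

section Diagram

variable {a b i : ℕ} {P : Finset (ℕ × ℕ)}

def tops (a : ℕ) (P : Finset (ℕ × ℕ)) : Finset ℕ := {q ∈ Icc 1 a | ∀ p ∈ P, p.1 ≠ q}

open Classical in
noncomputable def lastLeft (a : ℕ) (P : Finset (ℕ × ℕ)) : ℕ :=
  if h : ∃ i, (i, a) ∈ P then h.choose else a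

noncomputable def state (a : ℕ) (P : Finset (ℕ × ℕ)) : ℕ := rankIn (tops a P) (lastLeft a P)

theorem mem_tops {q : ℕ} : q ∈ tops a P ↔ (1 ≤ q ∧ q ≤ a) ∧ ∀ p ∈ P, p.1 ≠ q := by
  rw [tops, mem_filter, mem_Icc]

theorem lastLeft_mem_or_eq (a : ℕ) (P : Finset (ℕ × ℕ)) :
    (lastLeft a P, a) ∈ P ∨ lastLeft a P = a := by
  unfold lastLeft
  split_ifs with h
  · exact Or.inl h.choose_spec
  · exact Or.inr rfl

theorem lastLeft_of_forall_notMem (h : ∀ i, (i, a) ∉ P) : lastLeft a P = a := by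
  rw [lastLeft, dif_neg (not_exists.mpr h)]

theorem lastLeft_of_mem (h : (i, a) ∈ P) (huniq : ∀ i', (i', a) ∈ P → i' = i) :
    lastLeft a P = i := by
  have hex : ∃ i, (i, a) ∈ P := ⟨i, h⟩
  rw [lastLeft, dif_pos hex]
  exact huniq _ hex.choose_spec

namespace IsPartitionDiagram

variable (hP : IsPartitionDiagram a P)
include hP

theorem injOn_fst : Set.InjOn Prod.fst (P : Set (ℕ × ℕ)) := fun p hp q hq h =>
  by_contra fun hne => (hP.2 p hp q hq hne).1 h

theorem lastLeft_eq (h : (i, a) ∈ P) : lastLeft a P = i :=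
  lastLeft_of_mem h fun i' h' => by_contra fun hne =>
    (hP.2 _ h' _ h (by simpa using hne)).2 rfl

theorem lastLeft_le : lastLeft a P ≤ a := by
  rcases lastLeft_mem_or_eq a P with h | h
  · exact (hP.1 _ h).2.1.le
  · exact h.le

theorem card_tops : #(tops a P) = a - #P := by
  have hsub : P.image Prod.fst ⊆ Icc 1 a := fun x hx => by
    obtain ⟨p, hp, rfl⟩ := mem_image.mp hx
    have := hP.1 p hp
    exact mem_Icc.mpr ⟨this.1, by omega⟩
  have htops : tops a P = Icc 1 a \ P.image Prod.fst := by
    ext q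
    simp only [mem_tops, mem_sdiff, mem_Icc, mem_image, not_exists, not_and]
  rw [htops, card_sdiff_of_subset hsub, card_image_of_injOn hP.injOn_fst, Nat.card_Icc,
    Nat.add_sub_cancel]

theorem self_mem_tops (ha : 1 ≤ a) : a ∈ tops a P :=
  mem_tops.mpr ⟨⟨ha, le_rfl⟩, fun p hp => by have := hP.1 p hp; omega⟩

theorem card_lt (ha : 1 ≤ a) : #P < a := by
  have := card_pos.mpr ⟨a, hP.self_mem_tops ha⟩
  rw [hP.card_tops] at this
  omega

theorem rankIn_tops_self (ha : 1 ≤ a) : rankIn (tops a P) a = a - #P - 1 := by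
  rw [rankIn_of_forall_le (hP.self_mem_tops ha) fun t ht => (mem_tops.mp ht).1.2, hP.card_tops]

theorem state_lt (ha : 1 ≤ a) : state a P < a - #P := by
  have hmax := hP.rankIn_tops_self ha
  have : state a P ≤ rankIn (tops a P) a :=
    not_lt.mp fun h => (hP.lastLeft_le).not_gt ((rankIn_lt_rankIn_iff (hP.self_mem_tops ha)).mp h)
  have := hP.card_lt ha
  omega

end IsPartitionDiagram

theorem IsPartitionDiagram.subset {Q : Finset (ℕ × ℕ)} (hP : IsPartitionDiagram a P) (h : Q ⊆ P) :
    IsPartitionDiagram a Q :=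
  ⟨fun p hp => hP.1 p (h hp), fun p hp q hq => hP.2 p (h hp) q (h hq)⟩

theorem HasRightCrossing.mono {Q : Finset (ℕ × ℕ)} (hQ : HasRightCrossing Q) (h : Q ⊆ P) :
    HasRightCrossing P :=
  let ⟨p, hp, q, hq, hpq⟩ := hQ
  ⟨p, h hp, q, h hq, hpq⟩

theorem IsPartitionDiagram.succ (hP : IsPartitionDiagram a P) : IsPartitionDiagram (a + 1) P :=
  ⟨fun p hp => by have := hP.1 p hp; omega, hP.2⟩

theorem IsPartitionDiagram.of_succ (hP : IsPartitionDiagram (a + 1) P)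
    (h : ∀ i, (i, a + 1) ∉ P) : IsPartitionDiagram a P := by
  refine ⟨fun p hp => ?_, hP.2⟩
  have := hP.1 p hp
  have : p.2 ≠ a + 1 := fun he => h p.1 (he ▸ hp)
  omega

theorem IsPartitionDiagram.insert_arc (hP : IsPartitionDiagram a P) (hi : i ∈ tops a P) :
    IsPartitionDiagram (a + 1) (insert (i, a + 1) P) := by
  obtain ⟨⟨hi1, hia⟩, hitop⟩ := mem_tops.mp hi
  refine ⟨fun p hp => ?_, fun p hp q hq hne => ?_⟩
  · rcases mem_insert.mp hp with rfl | hp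
    · exact ⟨hi1, by omega, le_rfl⟩
    · have := hP.1 p hp; omega
  · rcases mem_insert.mp hp with rfl | hp <;> rcases mem_insert.mp hq with rfl | hq
    · exact absurd rfl hne
    · exact ⟨(hitop q hq).symm, by have := hP.1 q hq; simp only; omega⟩
    · exact ⟨hitop p hp, by have := hP.1 p hp; simp only; omega⟩
    · exact hP.2 p hp q hq hne

theorem IsPartitionDiagram.state_succ (hP : IsPartitionDiagram a P) :
    state (a + 1) P = a - #P := by
  have hlast : lastLeft (a + 1) P = a + 1 :=
    lastLeft_of_forall_notMem fun i h => by have := hP.1 _ h; omega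
  have htops : {t ∈ tops (a + 1) P | t < a + 1} = tops a P := by
    ext t
    simp only [mem_filter, mem_tops]
    exact ⟨fun ⟨⟨⟨h1, _⟩, h⟩, ht⟩ => ⟨⟨h1, by omega⟩, h⟩,
      fun ⟨⟨h1, h2⟩, h⟩ => ⟨⟨⟨h1, by omega⟩, h⟩, by omega⟩⟩
  rw [state, hlast, rankIn, htops, hP.card_tops]

theorem IsPartitionDiagram.state_insert (hP : IsPartitionDiagram a P) (hia : i ≤ a) :
    state (a + 1) (insert (i, a + 1) P) = rankIn (tops a P) i := by
  have hlast : lastLeft (a + 1) (insert (i, a + 1) P) = i :=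
    lastLeft_of_mem (mem_insert_self _ _) fun i' h => by
      rcases mem_insert.mp h with h | h
      · exact (Prod.mk.inj h).1
      · have := hP.1 _ h; omega
  have htops : {t ∈ tops (a + 1) (insert (i, a + 1) P) | t < i} = {t ∈ tops a P | t < i} := by
    ext t
    simp only [mem_filter, mem_tops, forall_mem_insert]
    constructor
    · rintro ⟨⟨⟨h1, -⟩, -, hall⟩, hti⟩; exact ⟨⟨⟨h1, by omega⟩, hall⟩, hti⟩
    · rintro ⟨⟨⟨h1, -⟩, hall⟩, hti⟩; exact ⟨⟨⟨h1, by omega⟩, hti.ne', hall⟩, hti⟩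
  rw [state, hlast, rankIn, htops, rankIn]

theorem IsPartitionDiagram.hasRightCrossing_insert_iff (hP : IsPartitionDiagram a P) :
    HasRightCrossing (insert (i, a + 1) P) ↔ HasRightCrossing P ∨ (lastLeft a P < i ∧ i < a) := by
  constructor
  · rintro ⟨p, hp, q, hq, h1, h2, h3, h4⟩
    rcases mem_insert.mp hp with rfl | hp <;> rcases mem_insert.mp hq with rfl | hq
    · simp only at h3; omega
    · have := hP.1 q hq; simp only at h4; omega
    · have hpa : p.2 = a := by simp only at h4; omega
      have : (p.1, a) ∈ P := hpa ▸ hp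
      rw [hP.lastLeft_eq this]
      simp only at h1 h2
      exact Or.inr ⟨h1, by omega⟩
    · exact Or.inl ⟨p, hp, q, hq, h1, h2, h3, h4⟩
  · rintro (⟨p, hp, q, hq, h⟩ | ⟨h1, h2⟩)
    · exact ⟨p, mem_insert_of_mem hp, q, mem_insert_of_mem hq, h⟩
    · have hmem : (lastLeft a P, a) ∈ P := (lastLeft_mem_or_eq a P).resolve_right (by omega)
      exact ⟨_, mem_insert_of_mem hmem, _, mem_insert_self _ _, h1, h2, by simp, rfl⟩

theorem IsPartitionDiagram.not_lastLeft_lt_and_lt_iff (hP : IsPartitionDiagram a P) (ha : 1 ≤ a)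
    (hi : i ∈ tops a P) :
    ¬(lastLeft a P < i ∧ i < a) ↔
      rankIn (tops a P) i < state a P ∨ rankIn (tops a P) i = a - #P - 1 := by
  have hne : i ≠ lastLeft a P ∨ lastLeft a P = a :=
    (lastLeft_mem_or_eq a P).imp_left fun h he => (mem_tops.mp hi).2 _ h he.symm
  have hia := (mem_tops.mp hi).1.2
  rw [state, rankIn_lt_rankIn_iff hi, ← hP.rankIn_tops_self ha,
    rankIn_injOn.eq_iff hi (hP.self_mem_tops ha)]
  omega

end Diagram

section Counting

open scoped Classical

variable {a b i w : ℕ} {P : Finset (ℕ × ℕ)}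

noncomputable def diagrams (a b : ℕ) : Finset (Finset (ℕ × ℕ)) :=
  {P ∈ (Icc 1 a ×ˢ Icc 1 a).powerset | P ∈ CTSet a b}

theorem mem_diagrams :
    P ∈ diagrams a b ↔ IsPartitionDiagram a P ∧ #P = b ∧ ¬HasRightCrossing P := by
  refine mem_filter.trans ⟨And.right, fun h => ⟨mem_powerset.mpr fun p hp => ?_, h⟩⟩
  have := h.1.1 p hp
  exact mem_product.mpr ⟨mem_Icc.mpr ⟨this.1, by omega⟩, mem_Icc.mpr ⟨by omega, this.2.2⟩⟩

theorem coe_diagrams (a b : ℕ) : (diagrams a b : Set (Finset (ℕ × ℕ))) = CTSet a b :=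
  Set.ext fun _ => mem_diagrams

theorem diagrams_eq_empty (ha : 1 ≤ a) (hab : a ≤ b) : diagrams a b = ∅ :=
  eq_empty_of_forall_notMem fun _ hP => by
    obtain ⟨hPa, rfl, -⟩ := mem_diagrams.mp hP
    exact (hPa.card_lt ha).not_ge hab

theorem diagrams_zero_zero : diagrams 0 0 = {∅} := by
  ext P
  rw [mem_diagrams, mem_singleton]
  refine ⟨fun ⟨_, h, _⟩ => card_eq_zero.mp h, ?_⟩
  rintro rfl
  exact ⟨⟨by simp, by simp⟩, rfl, by simp [HasRightCrossing]⟩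

theorem filter_diagrams_succ_not_closed (a b : ℕ) :
    {P ∈ diagrams (a + 1) b | ¬∃ i, (i, a + 1) ∈ P} = diagrams a b := by
  ext P
  simp only [mem_filter, mem_diagrams, not_exists]
  constructor
  · rintro ⟨⟨hP, hb, hc⟩, h⟩
    exact ⟨hP.of_succ h, hb, hc⟩
  · rintro ⟨hP, hb, hc⟩
    exact ⟨⟨hP.succ, hb, hc⟩, fun i h => by have := hP.1 _ h; omega⟩

theorem card_filter_diagrams_state (ha : 1 ≤ a) (p : ℕ → Prop) [DecidablePred p] :
    #{P ∈ diagrams a b | p (state a P)} =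
      ∑ w ∈ range (a - b) with p w, #{P ∈ diagrams a b | state a P = w} := by
  rw [card_eq_sum_card_fiberwise (f := state a) (t := {w ∈ range (a - b) | p w})]
  · refine sum_congr rfl fun w hw => ?_
    rw [filter_filter]
    exact congrArg card (filter_congr fun P _ => by
      constructor
      · exact And.right
      · intro h; exact ⟨h ▸ (mem_filter.mp hw).2, h⟩)
  · intro P hP
    obtain ⟨hP, hpP⟩ := mem_filter.mp hP
    obtain ⟨hPa, rfl, -⟩ := mem_diagrams.mp hP
    exact mem_filter.mpr ⟨mem_range.mpr (hPa.state_lt ha), hpP⟩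

theorem card_diagrams_succ_state (a b w : ℕ) :
    #{P ∈ diagrams (a + 1) b | state (a + 1) P = w} =
      (if w = a - b then #(diagrams a b) else 0) +
        #{P ∈ diagrams (a + 1) b | state (a + 1) P = w ∧ ∃ i, (i, a + 1) ∈ P} := by
  rw [← card_filter_add_card_filter_not (s := {P ∈ diagrams (a + 1) b | state (a + 1) P = w})
    (fun P => ∃ i, (i, a + 1) ∈ P), filter_filter, filter_filter, add_comm]
  congr 1
  have hopen : {P ∈ diagrams (a + 1) b | state (a + 1) P = w ∧ ¬∃ i, (i, a + 1) ∈ P} =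
      {P ∈ diagrams a b | w = a - b} := by
    rw [← filter_diagrams_succ_not_closed a b, filter_filter]
    refine filter_congr fun P hP => ?_
    by_cases hc : ∃ i, (i, a + 1) ∈ P
    · simp [hc]
    · obtain ⟨hPa, rfl, -⟩ :=
        mem_diagrams.mp (filter_diagrams_succ_not_closed a b ▸ mem_filter.mpr ⟨hP, hc⟩)
      simp [hc, hPa.state_succ, eq_comm]
  rw [hopen, filter_const, apply_ite card, card_empty]

theorem insert_mem_diagrams_iff (ha : 1 ≤ a) (hP : P ∈ diagrams a b) (hi : i ∈ tops a P) :
    insert (i, a + 1) P ∈ diagrams (a + 1) (b + 1) ↔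
      rankIn (tops a P) i < state a P ∨ rankIn (tops a P) i = a - b - 1 := by
  obtain ⟨hPa, rfl, hcross⟩ := mem_diagrams.mp hP
  have hnotMem : (i, a + 1) ∉ P := fun h => by have := hPa.1 _ h; omega
  rw [← hPa.not_lastLeft_lt_and_lt_iff ha hi, mem_diagrams, hPa.hasRightCrossing_insert_iff,
    card_insert_of_notMem hnotMem]
  simp [hPa.insert_arc hi, hcross]

theorem erase_mem_diagrams (hP : P ∈ diagrams (a + 1) (b + 1)) (hi : (i, a + 1) ∈ P) :
    P.erase (i, a + 1) ∈ diagrams a b ∧ i ∈ tops a (P.erase (i, a + 1)) := by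
  obtain ⟨hPa, hb, hcross⟩ := mem_diagrams.mp hP
  have hdistinct : ∀ p ∈ P.erase (i, a + 1), p.1 ≠ i ∧ p.2 ≠ a + 1 := fun p hp =>
    hPa.2 p (mem_of_mem_erase hp) _ hi (ne_of_mem_erase hp)
  refine ⟨mem_diagrams.mpr ⟨(hPa.subset (erase_subset _ _)).of_succ fun j hj => ?_, ?_, ?_⟩, ?_⟩
  · exact (hdistinct _ hj).2 rfl
  · rw [card_erase_of_mem hi, hb, Nat.add_sub_cancel]
  · exact fun h => hcross (h.mono (erase_subset _ _))
  · have := hPa.1 _ hi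
    exact mem_tops.mpr ⟨⟨this.1, by omega⟩, fun p hp => (hdistinct p hp).1⟩

theorem state_eq_rankIn_erase (hP : P ∈ diagrams (a + 1) (b + 1)) (hi : (i, a + 1) ∈ P) :
    state (a + 1) P = rankIn (tops a (P.erase (i, a + 1))) i := by
  obtain ⟨hP', hitop⟩ := erase_mem_diagrams hP hi
  rw [← (mem_diagrams.mp hP').1.state_insert (mem_tops.mp hitop).1.2, insert_erase hi]

theorem card_diagrams_succ_closed (hw : w < a - b) :
    #{P ∈ diagrams (a + 1) (b + 1) | state (a + 1) P = w ∧ ∃ i, (i, a + 1) ∈ P} =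
      #{P ∈ diagrams a b | w < state a P ∨ w = a - b - 1} := by
  have ha : 1 ≤ a := by omega
  refine card_nbij (fun P => P.erase (lastLeft (a + 1) P, a + 1)) ?_ ?_ ?_
  · intro P hPw
    obtain ⟨hP, hPw, i, hi⟩ := mem_filter.mp (mem_coe.mp hPw)
    obtain ⟨hP', hitop⟩ := erase_mem_diagrams hP hi
    simp only [(mem_diagrams.mp hP).1.lastLeft_eq hi, mem_coe, mem_filter]
    rw [← hPw, state_eq_rankIn_erase hP hi]
    exact ⟨hP', (insert_mem_diagrams_iff ha hP' hitop).mp (by rwa [insert_erase hi])⟩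
  · intro P₁ hPw₁ P₂ hPw₂ heq
    obtain ⟨hP₁, hw₁, i₁, hi₁⟩ := mem_filter.mp (mem_coe.mp hPw₁)
    obtain ⟨hP₂, hw₂, i₂, hi₂⟩ := mem_filter.mp (mem_coe.mp hPw₂)
    simp only [(mem_diagrams.mp hP₁).1.lastLeft_eq hi₁, (mem_diagrams.mp hP₂).1.lastLeft_eq hi₂]
      at heq
    have htop₁ := (erase_mem_diagrams hP₁ hi₁).2
    have htop₂ := (erase_mem_diagrams hP₂ hi₂).2
    have hrank₁ := state_eq_rankIn_erase hP₁ hi₁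
    have hrank₂ := state_eq_rankIn_erase hP₂ hi₂
    rw [heq] at htop₁ hrank₁
    obtain rfl : i₁ = i₂ := rankIn_injOn htop₁ htop₂ (by rw [← hrank₁, ← hrank₂, hw₁, hw₂])
    rw [← insert_erase hi₁, ← insert_erase hi₂, heq]
  · intro P' hPw'
    obtain ⟨hP', hallowed⟩ := mem_filter.mp (mem_coe.mp hPw')
    obtain ⟨hP'a, rfl, -⟩ := mem_diagrams.mp hP'
    obtain ⟨i, hitop, rfl⟩ :=
      exists_rankIn_eq (T := tops a P') (hP'a.card_tops ▸ hw)
    have hnotMem : (i, a + 1) ∉ P' := fun h => by have := hP'a.1 _ h; omega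
    have hins := (insert_mem_diagrams_iff ha hP' hitop).mpr hallowed
    refine ⟨insert (i, a + 1) P', ?_, ?_⟩
    · simp only [mem_coe, mem_filter]
      exact ⟨hins, hP'a.state_insert (mem_tops.mp hitop).1.2, i, mem_insert_self _ _⟩
    · simp only [(mem_diagrams.mp hins).1.lastLeft_eq (mem_insert_self _ _), erase_insert hnotMem]

end Counting

section Series

open scoped Classical

variable (R : Type*) [CommRing R]

noncomputable def diagramSeries (n : ℕ) : PowerSeries R :=
  PowerSeries.mk fun b => (#(diagrams (n + b) b) : R)

noncomputable def stateSeries (n w : ℕ) : PowerSeries R :=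
  PowerSeries.mk fun b => (#{P ∈ diagrams (n + b) b | state (n + b) P = w} : R)

theorem diagramSeries_zero : diagramSeries R 0 = 1 := by
  ext b
  rw [diagramSeries, PowerSeries.coeff_mk, PowerSeries.coeff_one, zero_add]
  rcases Nat.eq_zero_or_pos b with rfl | hb
  · simp [diagrams_zero_zero]
  · simp [diagrams_eq_empty hb le_rfl, hb.ne']

theorem diagramSeries_succ (n : ℕ) :
    diagramSeries R (n + 1) = ∑ w ∈ range (n + 1), stateSeries R (n + 1) w := by
  ext b
  have h := card_filter_diagrams_state (a := n + 1 + b) (b := b) (by omega) fun _ => True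
  simp only [filter_true_of_mem fun _ _ => trivial, Nat.add_sub_cancel] at h
  simp [diagramSeries, stateSeries, h]

theorem stateSeries_succ (n w : ℕ) (hw : w ∈ range (n + 1)) :
    stateSeries R (n + 1) w = (if w = n then diagramSeries R n else 0) +
      PowerSeries.X * ∑ w' ∈ range (n + 1) with w < w' ∨ w = n, stateSeries R (n + 1) w' := by
  have hwn : w < n + 1 := mem_range.mp hw
  ext b
  rcases b with _ | c
  · have hclosed : {P ∈ diagrams (n + 1) 0 | state (n + 1) P = w ∧ ∃ i, (i, n + 1) ∈ P} = ∅ :=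
      filter_eq_empty_iff.mpr fun P hP ⟨_, i, hi⟩ => by
        rw [card_eq_zero.mp (mem_diagrams.mp hP).2.1] at hi
        exact notMem_empty _ hi
    have hrec := card_diagrams_succ_state n 0 w
    rw [hclosed, card_empty, add_zero, Nat.sub_zero] at hrec
    rcases eq_or_ne w n with rfl | h <;> simp [stateSeries, diagramSeries, *]
  · have hclosed := card_diagrams_succ_closed (a := n + 1 + c) (b := c) (w := w) (by omega)
    rw [card_filter_diagrams_state (a := n + 1 + c) (b := c) (by omega)
      (fun s => w < s ∨ w = n + 1 + c - c - 1)] at hclosed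
    have hrec := card_diagrams_succ_state (n + 1 + c) (c + 1) w
    rw [hclosed, show n + 1 + c - (c + 1) = n by omega, show n + 1 + c - c = n + 1 by omega,
      Nat.add_sub_cancel] at hrec
    simp only [stateSeries, diagramSeries, map_add, PowerSeries.coeff_mk,
      PowerSeries.coeff_succ_X_mul, map_sum, apply_ite (PowerSeries.coeff (c + 1)), map_zero]
    rw [show n + 1 + (c + 1) = n + 1 + c + 1 by omega, hrec, show n + (c + 1) = n + 1 + c by omega]
    push_cast
    rfl

theorem diagramSeries_succ_mul (n : ℕ) :
    diagramSeries R (n + 1) * (1 - PowerSeries.X * (1 + PowerSeries.X) ^ n) =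
      diagramSeries R n * (1 + PowerSeries.X) ^ n := by
  rw [diagramSeries_succ]
  exact sum_mul_eq_of_transfer _ _ n _ (stateSeries_succ R n)

theorem diagramSeries_mul_prod (n : ℕ) :
    diagramSeries R n * ∏ j ∈ range n, (1 - PowerSeries.X * (1 + PowerSeries.X) ^ j) =
      (1 + PowerSeries.X) ^ n.choose 2 := by
  induction n with
  | zero => simp [diagramSeries_zero]
  | succ n ih =>
    have hchoose : (n + 1).choose 2 = n.choose 2 + n := by
      rw [Nat.choose_succ_succ' n 1, Nat.choose_one_right, add_comm]
    rw [prod_range_succ, ← mul_assoc, mul_right_comm, diagramSeries_succ_mul, mul_right_comm, ih,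
      ← pow_add, hchoose]

end Series

section Bivariate

open MvPowerSeries

variable {R : Type*} [CommRing R]

theorem single_add_single_inj {p q p' q' : ℕ} :
    Finsupp.single (0 : Fin 2) p + Finsupp.single 1 q =
        Finsupp.single 0 p' + Finsupp.single 1 q' ↔ p = p' ∧ q = q' := by
  refine ⟨fun h => ?_, fun ⟨hp, hq⟩ => hp ▸ hq ▸ rfl⟩
  have h0 := DFunLike.congr_fun h 0
  have h1 := DFunLike.congr_fun h 1
  simp only [Finsupp.add_apply, Finsupp.single_apply] at h0 h1
  exact ⟨by simpa using h0, by simpa using h1⟩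

theorem hasSubst_X_mul_X : PowerSeries.HasSubst (X 0 * X 1 : MvPowerSeries (Fin 2) R) :=
  PowerSeries.HasSubst.of_constantCoeff_zero (by simp)

theorem coeff_subst_X_mul_X (f : PowerSeries R) (p q : ℕ) :
    coeff (Finsupp.single 0 p + Finsupp.single 1 q)
        (f.subst (X 0 * X 1 : MvPowerSeries (Fin 2) R)) =
      if p = q then PowerSeries.coeff q f else 0 := by
  have hpow (d : ℕ) : (X 0 * X 1 : MvPowerSeries (Fin 2) R) ^ d =
      monomial (Finsupp.single 0 d + Finsupp.single 1 d) 1 := by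
    rw [mul_pow, X_pow_eq, X_pow_eq, monomial_mul_monomial, one_mul]
  rw [PowerSeries.coeff_subst hasSubst_X_mul_X, finsum_eq_single _ q]
  · simp [hpow, coeff_monomial, (Finsupp.single_injective _).eq_iff]
  · intro d hd
    simp [hpow, coeff_monomial, single_add_single_inj, Ne.symm hd]

theorem coeff_X_pow_mul_subst_X_mul_X (f : PowerSeries R) (n a b : ℕ) :
    coeff (Finsupp.single 0 a + Finsupp.single 1 b)
        ((X 0 : MvPowerSeries (Fin 2) R) ^ n * f.subst (X 0 * X 1 : MvPowerSeries (Fin 2) R)) =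
      if n + b = a then PowerSeries.coeff b f else 0 := by
  rw [X_pow_eq, coeff_monomial_mul]
  by_cases hna : n ≤ a
  · have hle : Finsupp.single (0 : Fin 2) n ≤ Finsupp.single 0 a + Finsupp.single 1 b := by
      intro i; fin_cases i <;> simp [hna]
    have hsub : Finsupp.single (0 : Fin 2) a + Finsupp.single 1 b - Finsupp.single 0 n =
        Finsupp.single 0 (a - n) + Finsupp.single 1 b := by
      ext i; fin_cases i <;> simp
    rw [if_pos hle, hsub, one_mul, coeff_subst_X_mul_X]
    congr 1
    exact propext (by omega)
  · have hle : ¬Finsupp.single (0 : Fin 2) n ≤ Finsupp.single 0 a + Finsupp.single 1 b :=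
      fun h => hna (by simpa using h 0)
    rw [if_neg hle, if_neg (by omega)]

end Bivariate

open MvPowerSeries in
theorem gfTerm_eq (n : ℕ) :
    gfTerm n = X 0 ^ n * (diagramSeries ℚ n).subst (X 0 * X 1 : MvPowerSeries (Fin 2) ℚ) := by
  set u : MvPowerSeries (Fin 2) ℚ := X 0 * X 1
  have key := congrArg (PowerSeries.substAlgHom (hasSubst_X_mul_X (R := ℚ)))
    (diagramSeries_mul_prod ℚ n)
  simp only [map_mul, map_prod, map_sub, map_one, map_pow, map_add, PowerSeries.substAlgHom_X,
    PowerSeries.coe_substAlgHom] at key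
  have hunit : ∀ k ∈ range n, (1 - u * (1 + u) ^ k) * (1 - (1 + u) ^ k * X 0 * X 1)⁻¹ = 1 :=
    fun k _ => by
      rw [show (1 + u) ^ k * X 0 * X 1 = u * (1 + u) ^ k by ring]
      exact MvPowerSeries.mul_inv_cancel _ (by simp [u])
  rw [gfTerm, ← key, mul_assoc, mul_assoc, ← prod_mul_distrib, prod_congr rfl hunit, prod_const_one,
    mul_one]

/-- Stated coefficient-wise: only the terms with `n ≤ a` can contribute to the coefficient of
`x^a y^b`, since `gfTerm n` is divisible by `x^n`. -/
theorem stmt12 (a b : ℕ) (ha : 1 ≤ a) :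
    ((CTSet a b).ncard : ℚ) =
      MvPowerSeries.coeff (Finsupp.single 0 a + Finsupp.single 1 b)
        (∑ n ∈ Finset.Icc 1 a, gfTerm n) := by
  simp only [← coe_diagrams, Set.ncard_coe_finset, map_sum, gfTerm_eq,
    coeff_X_pow_mul_subst_X_mul_X, diagramSeries, PowerSeries.coeff_mk]
  rcases lt_or_ge b a with hba | hab
  · rw [sum_eq_single (a - b)]
    · simp [Nat.sub_add_cancel hba.le]
    · intro n _ hn; rw [if_neg (by omega)]
    · intro hn; exact absurd (mem_Icc.mpr ⟨by omega, by omega⟩) hn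
  · rw [diagrams_eq_empty ha hab, card_empty, Nat.cast_zero]
    exact (sum_eq_zero fun n hn => if_neg (by have := (mem_Icc.mp hn).1; omega)).symm
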